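/- In ℚ[[z]] one has the identity ∑_{n≥0} z^{2n}/(4^n (2n+1)!) = exp(∑_{k≥2} B_k·z^k/(k·k!)), where B_k denotes the k-th Bernoulli number and exp is the formal exponential. (This is the formal version of ζ^{1/2}/(ζ−1) = (1/(2πiz))·exp(−∑_{k≥2} (B_k/k)·(2πiz)^k/k!) with ζ = e^{2πiz}, i.e. of z·e^{z/2}/(e^z−1) = exp(−∑_{k≥2} (B_k/k)·z^k/k!).) -/

import Mathlib

open PowerSeries Finset

noncomputable section

/-- `ℚ[[q]]` -/
abbrev QQ : Type := PowerSeries ℚ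
/-- `(ℚ[[q]])[[z]]` -/
abbrev QQZ : Type := PowerSeries QQ

/-- The rank of a partition: largest part minus number of parts. -/
def Nat.Partition.rank {n : ℕ} (p : n.Partition) : ℤ :=
  (p.parts.sup : ℤ) - (Multiset.card p.parts : ℤ)

/-- `N(m,n)`: the number of partitions of `n` with rank `m`. -/
def Nrk (m : ℤ) (n : ℕ) : ℕ := Nat.card {p : n.Partition // p.rank = m}

/-- The `k`-th rank moment `R_k(q) = ∑_{n≥0} (∑_m m^k N(m,n)) q^n`. -/
def Rmom (k : ℕ) : QQ :=
  PowerSeries.mk fun n => ∑ m ∈ Finset.Icc (-(n : ℤ)) (n : ℤ), (m : ℚ) ^ k * (Nrk m n : ℚ)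

/-- The crank of a partition. -/
def Nat.Partition.crank {n : ℕ} (p : n.Partition) : ℤ :=
  if p.parts.count 1 = 0 then (p.parts.sup : ℤ)
  else ((Multiset.card (p.parts.filter fun x => p.parts.count 1 < x)) : ℤ)
        - (p.parts.count 1 : ℤ)

/-- `M(m,n)`: crank counts, with the exceptional values at `n = 1`. -/
def Mcr (m : ℤ) (n : ℕ) : ℤ :=
  if n = 1 then (if m = 1 ∨ m = -1 then 1 else if m = 0 then -1 else 0)
  else (Nat.card {p : n.Partition // p.crank = m} : ℤ)

/-- The `k`-th crank moment `C_k(q) = ∑_{n≥0} (∑_m m^k M(m,n)) q^n`. -/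
def Cmom (k : ℕ) : QQ :=
  PowerSeries.mk fun n => ∑ m ∈ Finset.Icc (-(n : ℤ)) (n : ℤ), (m : ℚ) ^ k * (Mcr m n : ℚ)

/-- `(q)_∞ = ∏_{n≥1} (1 - q^n)`, defined coefficientwise via its stable truncations. -/
def qPoch : QQ :=
  PowerSeries.mk fun m =>
    PowerSeries.coeff m (∏ n ∈ Finset.Icc 1 m, (1 - (PowerSeries.X : QQ) ^ n))

/-- `S(z) = ∑_{n≥0} z^(2n)/(4^n (2n+1)!)`, the power series of `2 sinh(z/2)/z`. -/
def Sz {R : Type*} [CommRing R] [Algebra ℚ R] : PowerSeries R :=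
  PowerSeries.mk fun m =>
    if Even m then algebraMap ℚ R ((4 ^ (m / 2) * (m + 1).factorial : ℚ))⁻¹ else 0

/-- Formal exponential of a power series (with zero constant term) over a `ℚ`-algebra. -/
def pexp {R : Type*} [CommRing R] [Algebra ℚ R] (F : PowerSeries R) : PowerSeries R :=
  PowerSeries.mk fun m =>
    ∑ n ∈ Finset.range (m + 1), (n.factorial : ℚ)⁻¹ • PowerSeries.coeff m (F ^ n)

/-- `φ(λ) = ∏_j 2^(m_j)/(m_j! (j!)^(m_j))` where `m_j` is the number of parts equal to `j`. -/
def phiP {n : ℕ} (p : n.Partition) : ℚ :=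
  ∏ j ∈ Finset.Icc 1 n,
    (2 : ℚ) ^ (p.parts.count j) /
      ((p.parts.count j).factorial * (j.factorial : ℚ) ^ (p.parts.count j))

/-- `h_λ = ∏_j h_j^(m_j)`. -/
def prodPow {n : ℕ} (h : ℕ → QQ) (p : n.Partition) : QQ :=
  ∏ j ∈ Finset.Icc 1 n, h j ^ (p.parts.count j)

/-- The partition trace `Tr_n(φ,h) = ∑_{λ ⊢ n} φ(λ) h_λ`. -/
def Trphi (h : ℕ → QQ) (n : ℕ) : QQ :=
  ∑ p : n.Partition, PowerSeries.C (R := ℚ) (phiP p) * prodPow h p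

/-- The partition trace `Tr_n(ψ,h)` with `ψ(λ) = (-1)^(m_1+⋯+m_n) φ(λ)`. -/
def Trpsi (h : ℕ → QQ) (n : ℕ) : QQ :=
  ∑ p : n.Partition,
    PowerSeries.C (R := ℚ) ((-1) ^ (Multiset.card p.parts) * phiP p) * prodPow h p

/-- The Eisenstein series `G_k = -B_k/(2k) + ∑_{n,m≥1} m^(k-1) q^(nm)` for even `k ≥ 2`,
and `G_k = 0` otherwise. -/
def Gk (k : ℕ) : QQ :=
  if 2 ≤ k ∧ Even k then
    PowerSeries.mk fun r =>
      if r = 0 then -(bernoulli k : ℚ) / (2 * k)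
      else ∑ p ∈ Nat.divisorsAntidiagonal r, (p.2 : ℚ) ^ (k - 1)
  else 0

/-- The Eisenstein-type series `g_ℓ`. -/
def gl (l : ℕ) : QQ :=
  if l = 0 then 1
  else if Odd l then 0
  else
    PowerSeries.mk fun r =>
      if r = 0 then ((1 : ℚ) - 2 ^ (l - 1)) * (bernoulli l : ℚ) / (2 * l)
      else
        (∑ p ∈ Nat.divisorsAntidiagonal r,
          if 3 * (p.2 : ℤ) ≤ 2 * (p.1 : ℤ) - 1 then ((2 * (p.1 : ℤ) - 3 * (p.2 : ℤ) : ℤ) : ℚ) ^ (l - 1) else 0)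
        - (∑ p ∈ Nat.divisorsAntidiagonal r,
          if 6 * (p.2 : ℤ) ≤ (p.1 : ℤ) - 1 then (((p.1 : ℤ) - 6 * (p.2 : ℤ) : ℤ) : ℚ) ^ (l - 1) else 0)

/-- The derivation `D = q d/dq` on `ℚ[[q]]`. -/
def Dq (f : QQ) : QQ := PowerSeries.mk fun n => (n : ℚ) * PowerSeries.coeff n f

/-- `∑_{k≥0} R_k(q) z^k/k!`. -/
def Rgen : QQZ := PowerSeries.mk fun k => (k.factorial : ℚ)⁻¹ • Rmom k

/-- `∑_{k≥0} C_k(q) z^k/k!`. -/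
def Cgen : QQZ := PowerSeries.mk fun k => (k.factorial : ℚ)⁻¹ • Cmom k

/-- The defining identity of the sequence `(f_k)`:
`∑_{k≥0} R_k(q) z^k/k! = S(z) (q)_∞⁻¹ exp(2 ∑_{k≥1} f_k z^k/k!)`. -/
def fHyp (f : ℕ → QQ) : Prop :=
  Rgen = Sz * PowerSeries.C (R := QQ) qPoch⁻¹ *
    pexp (PowerSeries.mk fun k => if k = 0 then 0 else (2 * (k.factorial : ℚ)⁻¹) • f k)

/-!
Write `S(z) = (e^{z/2} - e^{-z/2})/z`. Its logarithmic derivative is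
`S'/S = 1/2 + 1/(e^z - 1) - 1/z = (z/(e^z - 1) - 1)/z + 1/2`, and since
`z/(e^z - 1) = 1 - z/2 + ∑_{k≥2} B_k z^k/k!` this is the derivative of
`F(z) = ∑_{k≥2} B_k z^k/(k·k!)`. Thus `S` and `exp F` both solve `y' = F' y` with `y(0) = 1`,
and over a field of characteristic zero such a solution is unique.
-/

section FormalExp

variable {R : Type*} [CommRing R] [Algebra ℚ R]

def expPartialSum (F : R⟦X⟧) (N : ℕ) : R⟦X⟧ :=
  ∑ n ∈ range N, (n.factorial : ℚ)⁻¹ • F ^ n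

theorem expPartialSum_succ (F : R⟦X⟧) (N : ℕ) :
    expPartialSum F (N + 1) = expPartialSum F N + (N.factorial : ℚ)⁻¹ • F ^ N :=
  sum_range_succ _ _

theorem coeff_pexp_eq_coeff_expPartialSum {F : R⟦X⟧} (hF : constantCoeff F = 0) {m N : ℕ}
    (hmN : m < N) : coeff m (pexp F) = coeff m (expPartialSum F N) := by
  have hvanish : ∀ n, m < n → coeff m (F ^ n) = 0 := fun n hn =>
    X_pow_dvd_iff.1 (pow_dvd_pow_of_dvd (X_dvd_iff.2 hF) n) m hn
  rw [pexp, coeff_mk, expPartialSum, map_sum]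
  simp only [coeff_smul]
  refine sum_subset (range_subset_range.2 hmN) fun n _ hn => ?_
  rw [hvanish n (by simpa using hn), smul_zero]

theorem derivative_expPartialSum_succ (F : R⟦X⟧) (N : ℕ) :
    d⁄dX R (expPartialSum F (N + 1)) = d⁄dX R F * expPartialSum F N := by
  induction N with
  | zero => simp [expPartialSum]
  | succ N ih =>
    have hfact : ((N + 1).factorial : ℚ)⁻¹ * (N + 1 : ℕ) = (N.factorial : ℚ)⁻¹ := by
      rw [Nat.factorial_succ]
      push_cast
      field_simp
    have hterm : ((N + 1).factorial : ℚ)⁻¹ • ((N + 1 : ℕ) * F ^ N * d⁄dX R F) =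
        d⁄dX R F * ((N.factorial : ℚ)⁻¹ • F ^ N) := by
      rw [mul_assoc, ← nsmul_eq_mul, ← Nat.cast_smul_eq_nsmul ℚ, smul_smul, hfact, mul_comm,
        mul_smul_comm]
    rw [expPartialSum_succ F (N + 1), map_add, ih, map_rat_smul, derivative_pow,
      add_tsub_cancel_right, hterm, ← mul_add, ← expPartialSum_succ]

theorem derivative_pexp {F : R⟦X⟧} (hF : constantCoeff F = 0) :
    d⁄dX R (pexp F) = d⁄dX R F * pexp F := by
  ext m
  calc coeff m (d⁄dX R (pexp F))
      = coeff m (d⁄dX R (expPartialSum F (m + 2))) := by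
        rw [coeff_derivative, coeff_derivative,
          coeff_pexp_eq_coeff_expPartialSum hF (by omega : m + 1 < m + 2)]
    _ = coeff m (d⁄dX R F * expPartialSum F (m + 1)) := by
        rw [derivative_expPartialSum_succ]
    _ = coeff m (d⁄dX R F * pexp F) := by
        rw [coeff_mul, coeff_mul]
        refine sum_congr rfl fun p hp => ?_
        rw [HasAntidiagonal.mem_antidiagonal] at hp
        rw [coeff_pexp_eq_coeff_expPartialSum hF (N := m + 1) (by omega)]

theorem constantCoeff_pexp (F : R⟦X⟧) : constantCoeff (pexp F) = 1 := by
  rw [← coeff_zero_eq_constantCoeff_apply]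
  simp [pexp]

end FormalExp

theorem eq_of_derivative_eq_mul_self {K : Type*} [Field K] [CharZero K] {G f g : K⟦X⟧}
    (hf : d⁄dX K f = G * f) (hg : d⁄dX K g = G * g)
    (h0 : constantCoeff f = constantCoeff g) (hg0 : constantCoeff g ≠ 0) : f = g := by
  have hgg : g * g⁻¹ = 1 := PowerSeries.mul_inv_cancel g hg0
  have hderiv : d⁄dX K (f * g⁻¹) = d⁄dX K 1 := by
    rw [Derivation.leibniz, derivative_inv', derivative_one, hf, hg, smul_eq_mul, smul_eq_mul]
    linear_combination -(G * f * g⁻¹) * hgg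
  have hquot : f * g⁻¹ = 1 :=
    derivative.ext hderiv (by rw [map_mul, map_one, h0, ← map_mul, hgg, map_one])
  calc f = f * g⁻¹ * g := by rw [mul_assoc, mul_comm g⁻¹, hgg, mul_one]
    _ = g := by rw [hquot, one_mul]

theorem derivative_rescale_exp {A : Type*} [CommRing A] [Algebra ℚ A] (a : A) :
    d⁄dX A (rescale a (exp A)) = C a * rescale a (exp A) := by
  ext n
  have hfact : algebraMap ℚ A (1 / (n + 1).factorial) * ((n : A) + 1) =
      algebraMap ℚ A (1 / n.factorial) := by
    rw [← Nat.cast_succ, ← map_natCast (algebraMap ℚ A), ← map_mul, Nat.factorial_succ]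
    congr 1
    push_cast
    field_simp
  rw [coeff_derivative, coeff_C_mul, coeff_rescale, coeff_rescale, coeff_exp, coeff_exp,
    mul_assoc, hfact, pow_succ', mul_assoc]

theorem X_mul_Sz :
    X * Sz = rescale (2⁻¹ : ℚ) (exp ℚ) - rescale (-2⁻¹ : ℚ) (exp ℚ) := by
  ext n
  rw [map_sub, coeff_rescale, coeff_rescale, coeff_exp]
  cases n with
  | zero => simp [Sz]
  | succ m =>
    rw [coeff_succ_X_mul, Sz, coeff_mk]
    rcases Nat.even_or_odd m with ⟨r, rfl⟩ | ⟨r, rfl⟩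
    · rw [if_pos ⟨r, rfl⟩, Odd.neg_pow ⟨r, by ring⟩, ← two_mul,
        Nat.mul_div_cancel_left r two_pos]
      simp only [eq_ratCast, Rat.cast_id]
      have h4 : (4 : ℚ) ^ r = 2 ^ (2 * r) := by rw [pow_mul]; norm_num
      rw [h4, pow_succ]
      field_simp
      rw [← mul_pow]
      norm_num
    · rw [if_neg (Nat.not_even_iff_odd.2 ⟨r, rfl⟩), Even.neg_pow ⟨r + 1, by ring⟩, sub_self]

theorem constantCoeff_Sz : constantCoeff (Sz (R := ℚ)) = 1 := by
  rw [← coeff_zero_eq_constantCoeff_apply, Sz, coeff_mk]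
  norm_num

def bernoulliLogSeries : ℚ⟦X⟧ :=
  mk fun k => if 2 ≤ k then (bernoulli k : ℚ) / ((k : ℚ) * (k.factorial : ℚ)) else 0

theorem constantCoeff_bernoulliLogSeries : constantCoeff bernoulliLogSeries = 0 := by
  rw [← coeff_zero_eq_constantCoeff_apply, bernoulliLogSeries, coeff_mk]
  norm_num

theorem X_mul_derivative_bernoulliLogSeries :
    X * d⁄dX ℚ bernoulliLogSeries = bernoulliPowerSeries ℚ - 1 + C 2⁻¹ * X := by
  ext n
  rw [map_add, map_sub, bernoulliPowerSeries, coeff_mk, coeff_C_mul, coeff_X, coeff_one]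
  rcases n with _ | _ | m
  · simp
  · norm_num [coeff_derivative, bernoulliLogSeries, bernoulli_one]
  · rw [coeff_succ_X_mul, coeff_derivative, bernoulliLogSeries, coeff_mk,
      if_pos (by omega : 2 ≤ m + 2)]
    simp only [eq_ratCast, Rat.cast_id, if_neg (by omega : m + 2 ≠ 1),
      if_neg (by omega : m + 2 ≠ 0)]
    push_cast
    field_simp
    ring

theorem derivative_Sz : d⁄dX ℚ Sz = d⁄dX ℚ bernoulliLogSeries * Sz := by
  set E := exp ℚ
  set eh := rescale (2⁻¹ : ℚ) E
  set ei := rescale (-2⁻¹ : ℚ) E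
  have hprod : eh * ei = 1 := by
    rw [exp_mul_exp_eq_exp_add, add_neg_cancel, rescale_zero]
    simp
  have hsq : eh * eh = E := by
    rw [exp_mul_exp_eq_exp_add, ← two_mul, mul_inv_cancel₀ two_ne_zero, rescale_one]
    rfl
  have hhalf : C (2⁻¹ : ℚ) * 2 = 1 := by
    rw [← map_ofNat C 2, ← map_mul, inv_mul_cancel₀ two_ne_zero, map_one]
  have hXS : X * Sz = eh - ei := X_mul_Sz
  have hXdS : Sz + X * d⁄dX ℚ Sz = C 2⁻¹ * (eh + ei) := by
    have h := congrArg (d⁄dX ℚ) hXS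
    rw [Derivation.leibniz, map_sub, derivative_rescale_exp, derivative_rescale_exp,
      derivative_X, smul_eq_mul, smul_eq_mul, mul_one, map_neg] at h
    linear_combination h
  have hE : X * (E - 1) ≠ 0 := by
    refine mul_ne_zero X_ne_zero fun h => ?_
    have h1 := congrArg (coeff 1) h
    simp [E, coeff_exp] at h1
  -- clear the denominators of `S'/S = 1/2 + 1/(e^z - 1) - 1/z`
  apply mul_left_cancel₀ hE
  linear_combination (E - 1) * hXdS - (E - 1) * Sz * X_mul_derivative_bernoulliLogSeries
    - Sz * bernoulliPowerSeries_mul_exp_sub_one ℚ - (1 + C 2⁻¹ * (E - 1)) * hXS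
    + (E - 1) * ei * hhalf - ei * hsq + eh * hprod

/-- in `ℚ[[z]]`, `∑_{n≥0} z^(2n)/(4^n (2n+1)!) = exp(∑_{k≥2} B_k z^k/(k·k!))`. -/
theorem sinh_series_eq_exp_bernoulli :
    (Sz (R := ℚ)) = pexp (PowerSeries.mk fun k =>
      if 2 ≤ k then (bernoulli k : ℚ) / ((k : ℚ) * (k.factorial : ℚ)) else 0) := by
  change Sz = pexp bernoulliLogSeries
  refine eq_of_derivative_eq_mul_self derivative_Sz
    (derivative_pexp constantCoeff_bernoulliLogSeries) ?_ ?_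
  · rw [constantCoeff_Sz, constantCoeff_pexp]
  · rw [constantCoeff_pexp]
    exact one_ne_zero

end
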